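/- For any m, n ≥ 3, the n × m grid graph G_{n,m} has a minimum connected dominating set that contains none of the four corner vertices (1,1), (1,m), (n,1), (n,m). -/

import Mathlib

/-!
Let `S` be a minimum connected dominating set containing a corner `c`, and let `d` be the
diagonal neighbour of `c` (e.g. `(2, 2)` for `(1, 1)`). Both grid neighbours of `c` are adjacent
to `d`, so `T = S - c + d` still dominates them and `G[T]` is the image of the connected graph
`G[S]` under `c ↦ d`; `c` itself is dominated by its neighbour in `S`. As `|T| ≤ |S|`, `T` is
again minimum, and it contains one corner fewer since `d` is not a corner (`n, m ≥ 3`).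
-/

open Finset

/-- The infinite grid graph on `ℤ × ℤ`: two points are adjacent iff their
Manhattan distance is `1`. -/
def GridZ : SimpleGraph (ℤ × ℤ) where
  Adj u v := |u.1 - v.1| + |u.2 - v.2| = 1
  symm := by
    constructor
    intro u v h
    beta_reduce at h ⊢
    rw [abs_sub_comm v.1 u.1, abs_sub_comm v.2 u.2]
    exact h
  loopless := by
    constructor
    intro u h
    simp at h

/-- The vertex set `[1,n] × [1,m]` of the `n × m` grid graph `G_{n,m}`. -/
def box (n m : ℕ) : Set (ℤ × ℤ) :=
  {p | 1 ≤ p.1 ∧ p.1 ≤ (n : ℤ) ∧ 1 ≤ p.2 ∧ p.2 ≤ (m : ℤ)}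

instance (n m : ℕ) (p : ℤ × ℤ) : Decidable (p ∈ box n m) :=
  inferInstanceAs (Decidable (1 ≤ p.1 ∧ p.1 ≤ (n : ℤ) ∧ 1 ≤ p.2 ∧ p.2 ≤ (m : ℤ)))

/-- `S` is a connected dominating set of the grid `G_{n,m}`:
`S ⊆ [1,n] × [1,m]`, the induced subgraph on `S` is connected, and every
vertex of the grid is in `S` or adjacent to a vertex of `S`. -/
def IsCDS (n m : ℕ) (S : Finset (ℤ × ℤ)) : Prop :=
  (S : Set (ℤ × ℤ)) ⊆ box n m ∧
    (GridZ.induce (S : Set (ℤ × ℤ))).Connected ∧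
    ∀ v ∈ box n m, ∃ u ∈ S, u = v ∨ GridZ.Adj u v

/-- The closed neighbourhood of a vertex in the (enlarged) grid. -/
def closedNbr (v : ℤ × ℤ) : Finset (ℤ × ℤ) :=
  {v, (v.1 + 1, v.2), (v.1 - 1, v.2), (v.1, v.2 + 1), (v.1, v.2 - 1)}

/-- The closed neighbourhood `N_{G'}[S]` of `S` in the enlarged grid `G'`. -/
def closedN (S : Finset (ℤ × ℤ)) : Finset (ℤ × ℤ) :=
  S.biUnion closedNbr

/-- The loss function `ℓ(S) = Σ_{v ∈ N_{G'}[S]} (|N_{G'}[v] ∩ S| - 1)`. -/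
def loss (S : Finset (ℤ × ℤ)) : ℕ :=
  ∑ v ∈ closedN S, ((closedNbr v ∩ S).card - 1)

/-- The boundary of `G_{n,m}`: vertices of the grid with degree at most 3. -/
def boundary (n m : ℕ) : Set (ℤ × ℤ) :=
  {p | p ∈ box n m ∧ (((closedNbr p).erase p).filter (· ∈ box n m)).card ≤ 3}

instance (n m : ℕ) (p : ℤ × ℤ) : Decidable (p ∈ boundary n m) :=
  inferInstanceAs
    (Decidable (p ∈ box n m ∧ (((closedNbr p).erase p).filter (· ∈ box n m)).card ≤ 3))

/-- The excess `e(S)`: the number of points of `S` on the boundary of the grid. -/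
def excess (n m : ℕ) (S : Finset (ℤ × ℤ)) : ℕ :=
  (S.filter (fun p => p ∈ boundary n m)).card

/-- The four corners of `G_{n,m}`. -/
def corners (n m : ℕ) : Set (ℤ × ℤ) :=
  {((1 : ℤ), (1 : ℤ)), ((1 : ℤ), (m : ℤ)), ((n : ℤ), (1 : ℤ)), ((n : ℤ), (m : ℤ))}

/-- The degree of a vertex `v` in the induced subgraph `G[S]`. -/
def degS (S : Finset (ℤ × ℤ)) (v : ℤ × ℤ) : ℕ :=
  (((closedNbr v).erase v) ∩ S).card

/-- The number of leaves (degree-1 vertices) of `G[S]`. -/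
def numLeaves (S : Finset (ℤ × ℤ)) : ℕ := (S.filter (fun v => degS S v = 1)).card

/-- The number of degree-3 vertices of `G[S]`. -/
def numDeg3 (S : Finset (ℤ × ℤ)) : ℕ := (S.filter (fun v => degS S v = 3)).card

/-- The number of degree-4 vertices of `G[S]`. -/
def numDeg4 (S : Finset (ℤ × ℤ)) : ℕ := (S.filter (fun v => degS S v = 4)).card

/-- A bend: a degree-2 vertex of `G[S]` having one vertical and one horizontal
neighbour in `S`. -/
def IsBend (S : Finset (ℤ × ℤ)) (v : ℤ × ℤ) : Prop :=
  degS S v = 2 ∧ ((v.1 + 1, v.2) ∈ S ∨ (v.1 - 1, v.2) ∈ S) ∧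
    ((v.1, v.2 + 1) ∈ S ∨ (v.1, v.2 - 1) ∈ S)

instance (S : Finset (ℤ × ℤ)) (v : ℤ × ℤ) : Decidable (IsBend S v) :=
  inferInstanceAs (Decidable (_ ∧ _ ∧ _))

/-- The number of bends of `G[S]`. -/
def numBends (S : Finset (ℤ × ℤ)) : ℕ := (S.filter (fun v => IsBend S v)).card

/-- The connected domination number `γ_c(G_{n,m})`. -/
noncomputable def connDomNum (n m : ℕ) : ℕ :=
  sInf {k | ∃ S : Finset (ℤ × ℤ), IsCDS n m S ∧ S.card = k}

/-- A maximal horizontal line segment of `G[S]`: the vertices `(i,a),…,(i,b)`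
all lie in `S`, and the segment cannot be extended in row `i`. -/
def IsMaxHSeg (S : Finset (ℤ × ℤ)) (i a b : ℤ) : Prop :=
  a ≤ b ∧ (∀ j, a ≤ j → j ≤ b → (i, j) ∈ S) ∧ (i, a - 1) ∉ S ∧ (i, b + 1) ∉ S

/-- A maximal vertical line segment of `G[S]`: the vertices `(a,j),…,(b,j)`
all lie in `S`, and the segment cannot be extended in column `j`. -/
def IsMaxVSeg (S : Finset (ℤ × ℤ)) (j a b : ℤ) : Prop :=
  a ≤ b ∧ (∀ i, a ≤ i → i ≤ b → (i, j) ∈ S) ∧ (a - 1, j) ∉ S ∧ (b + 1, j) ∉ S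

namespace SimpleGraph

variable {V : Type*} {G : SimpleGraph V} {s : Set V}

lemma induce_connected_of_exists_adj_lt (f : V → ℕ) {p₀ : V} (hp₀ : p₀ ∈ s)
    (h : ∀ p ∈ s, p ≠ p₀ → ∃ q ∈ s, G.Adj p q ∧ f q < f p) : (G.induce s).Connected := by
  have reach : ∀ k, ∀ p (hp : p ∈ s), f p = k → (G.induce s).Reachable ⟨p₀, hp₀⟩ ⟨p, hp⟩ := by
    intro k
    induction k using Nat.strong_induction_on with
    | _ k ih =>
      intro p hp hk
      by_cases hp' : p = p₀
      · subst hp'; rfl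
      obtain ⟨q, hq, hpq, hlt⟩ := h p hp hp'
      exact (ih _ (hk ▸ hlt) q hq rfl).trans (G := G.induce s) (Adj.reachable hpq.symm)
  exact (connected_iff_exists_forall_reachable _).2 ⟨⟨p₀, hp₀⟩, fun p => reach _ p.1 p.2 rfl⟩

lemma Connected.induce_insert_diff_singleton (hs : (G.induce s).Connected) {c d : V} (hc : c ∈ s)
    (hN : ∀ x ∈ s, G.Adj c x → G.Adj d x) : (G.induce (insert d (s \ {c}))).Connected := by
  classical
  let f : G.induce s →g G.induce (insert d (s \ {c})) :=
    { toFun := fun x => if hx : x.1 = c then ⟨d, Set.mem_insert _ _⟩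
        else ⟨x, Set.mem_insert_of_mem _ ⟨x.2, hx⟩⟩
      map_rel' := by
        rintro ⟨x, hx⟩ ⟨y, hy⟩ hxy
        simp only [comap_adj, Function.Embedding.subtype_apply] at hxy ⊢
        split_ifs with hxc hyc hyc
        · exact absurd (hxc.trans hyc.symm) hxy.ne
        · exact hN y hy (hxc ▸ hxy)
        · exact (hN x hx (hyc ▸ hxy.symm)).symm
        · exact hxy }
  refine hs.map f ?_
  rintro ⟨y, rfl | ⟨hy, hyc⟩⟩
  · exact ⟨⟨c, hc⟩, dif_pos rfl⟩
  · exact ⟨⟨y, hy⟩, dif_neg hyc⟩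

end SimpleGraph

lemma gridZ_adj_iff {u v : ℤ × ℤ} :
    GridZ.Adj u v ↔ (u.1 = v.1 ∧ (u.2 = v.2 + 1 ∨ v.2 = u.2 + 1)) ∨
      (u.2 = v.2 ∧ (u.1 = v.1 + 1 ∨ v.1 = u.1 + 1)) := by
  change |u.1 - v.1| + |u.2 - v.2| = 1 ↔ _
  grind

lemma mem_box_iff {n m : ℕ} {p : ℤ × ℤ} :
    p ∈ box n m ↔ 1 ≤ p.1 ∧ p.1 ≤ (n : ℤ) ∧ 1 ≤ p.2 ∧ p.2 ≤ (m : ℤ) :=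
  Iff.rfl

lemma gridZ_induce_box_connected {n m : ℕ} (hn : 1 ≤ n) (hm : 1 ≤ m) : (GridZ.induce (box n m)).Connected := by
  refine SimpleGraph.induce_connected_of_exists_adj_lt (fun p => (p.1 + p.2).toNat) (p₀ := (1, 1))
    ⟨le_rfl, by omega, le_rfl, by omega⟩ fun p hp hp₀ => ?_
  obtain ⟨h1, h2, h3, h4⟩ := mem_box_iff.1 hp
  by_cases hp1 : 1 < p.1
  · exact ⟨(p.1 - 1, p.2), ⟨by omega, by omega, h3, h4⟩, gridZ_adj_iff.2 (by omega), by omega⟩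
  · have : 1 < p.2 := by
      by_contra; exact hp₀ (Prod.ext (by omega) (by omega))
    exact ⟨(p.1, p.2 - 1), ⟨h1, h2, by omega, by omega⟩, gridZ_adj_iff.2 (by omega), by omega⟩

lemma exists_isCDS_card_eq_connDomNum {n m : ℕ} (hn : 1 ≤ n) (hm : 1 ≤ m) :
    ∃ S : Finset (ℤ × ℤ), IsCDS n m S ∧ S.card = connDomNum n m := by
  have hbox : IsCDS n m (Finset.Icc (1, 1) (n, m)) := by
    have hcoe : (Finset.Icc ((1 : ℤ), (1 : ℤ)) (n, m) : Set (ℤ × ℤ)) = box n m := by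
      ext p
      simp only [coe_Icc, Set.mem_Icc, Prod.le_def, mem_box_iff]
      tauto
    rw [IsCDS, hcoe]
    exact ⟨subset_rfl, gridZ_induce_box_connected hn hm,
      fun v hv => ⟨v, mem_coe.1 (hcoe ▸ hv), Or.inl rfl⟩⟩
  have hne : {k | ∃ S : Finset (ℤ × ℤ), IsCDS n m S ∧ S.card = k}.Nonempty := ⟨_, _, hbox, rfl⟩
  exact Nat.sInf_mem hne

lemma connDomNum_le_card {n m : ℕ} {S : Finset (ℤ × ℤ)} (hS : IsCDS n m S) :
    connDomNum n m ≤ S.card :=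
  Nat.sInf_le ⟨S, hS, rfl⟩

lemma IsCDS.insert_erase {n m : ℕ} {S : Finset (ℤ × ℤ)} {c d : ℤ × ℤ} (hS : IsCDS n m S)
    (hc : c ∈ S) (hd : d ∈ box n m) (hN : ∀ x ∈ box n m, GridZ.Adj c x → GridZ.Adj d x) :
    IsCDS n m (insert d (S.erase c)) := by
  obtain ⟨hsub, hconn, hdom⟩ := hS
  have mem_of_ne {u : ℤ × ℤ} (hu : u ∈ S) (huc : u ≠ c) : u ∈ insert d (S.erase c) :=
    mem_insert_of_mem (mem_erase.2 ⟨huc, hu⟩)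
  have hc_dom : ∃ u ∈ insert d (S.erase c), u = c ∨ GridZ.Adj u c := by
    by_cases hdc : d = c ∨ GridZ.Adj d c
    · exact ⟨d, mem_insert_self _ _, hdc⟩
    -- the vertex dominating `d` is not `c`, so `G[S]` is nontrivial and `c` has a neighbour in `S`
    obtain ⟨u, hu, hud⟩ := hdom d hd
    have huc : u ≠ c := by
      rintro rfl
      exact hdc (hud.imp Eq.symm fun h => h.symm)
    have : Nontrivial (S : Set (ℤ × ℤ)) :=
      ⟨⟨c, hc⟩, ⟨u, hu⟩, fun h => huc (congrArg Subtype.val h).symm⟩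
    obtain ⟨⟨y, hy⟩, hcy⟩ := hconn.preconnected.exists_adj_of_nontrivial ⟨c, hc⟩
    have hcy : GridZ.Adj c y := hcy
    exact ⟨y, mem_of_ne hy hcy.ne', Or.inr hcy.symm⟩
  refine ⟨?_, ?_, fun v hv => ?_⟩
  · rw [coe_insert, coe_erase]
    exact Set.insert_subset hd (Set.sdiff_subset.trans hsub)
  · rw [coe_insert, coe_erase]
    exact hconn.induce_insert_diff_singleton hc fun x hx => hN x (hsub hx)
  · obtain ⟨u, hu, huv⟩ := hdom v hv
    by_cases huc : u = c
    · subst huc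
      rcases huv with rfl | hcv
      · exact hc_dom
      · exact ⟨d, mem_insert_self _ _, Or.inr (hN v hv hcv)⟩
    · exact ⟨u, mem_of_ne hu huc, huv⟩

lemma exists_noncorner_adj_nbrs_of_mem_corners {n m : ℕ} (hn : 3 ≤ n) (hm : 3 ≤ m) {c : ℤ × ℤ}
    (hc : c ∈ corners n m) :
    ∃ d ∈ box n m, d ∉ corners n m ∧ ∀ x ∈ box n m, GridZ.Adj c x → GridZ.Adj d x := by
  simp only [corners, Set.mem_insert_iff, Set.mem_singleton_iff] at hc
  rcases hc with rfl | rfl | rfl | rfl <;>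
    [use (2, 2); use (2, m - 1); use (n - 1, 2); use (n - 1, m - 1)]
  all_goals simp only [mem_box_iff, corners, Set.mem_insert_iff, Set.mem_singleton_iff,
    Prod.ext_iff, gridZ_adj_iff]
  all_goals exact ⟨by omega, by omega, fun x _ _ => by omega⟩

lemma ncard_coe_insert_erase_inter_lt {α : Type*} [DecidableEq α] {S : Finset α} {K : Set α}
    {c d : α} (hcS : c ∈ S) (hcK : c ∈ K) (hdK : d ∉ K) :
    ((insert d (S.erase c) : Finset α) ∩ K : Set α).ncard < ((S : Set α) ∩ K).ncard := by
  have hT : ((insert d (S.erase c) : Finset α) ∩ K : Set α) = ((S : Set α) ∩ K) \ {c} := by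
    ext x
    simp only [coe_insert, coe_erase, Set.mem_inter_iff, Set.mem_insert_iff, Set.mem_sdiff,
      Set.mem_singleton_iff]
    grind
  rw [hT]
  exact Set.ncard_sdiff_singleton_lt_of_mem ⟨hcS, hcK⟩ (S.finite_toSet.inter_of_left K)

/-- For `m, n ≥ 3`, the grid `G_{n,m}` has a minimum connected
dominating set containing none of the four corner vertices. -/
theorem exists_min_cds_avoiding_corners (n m : ℕ) (hn : 3 ≤ n) (hm : 3 ≤ m) :
    ∃ S : Finset (ℤ × ℤ), IsCDS n m S ∧ S.card = connDomNum n m ∧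
      ∀ c ∈ corners n m, c ∉ S := by
  obtain ⟨S, hS, hcard⟩ := exists_isCDS_card_eq_connDomNum (n := n) (m := m) (by omega) (by omega)
  induction hk : ((S : Set (ℤ × ℤ)) ∩ corners n m).ncard using Nat.strong_induction_on
    generalizing S with
  | _ k ih =>
    by_cases h : ∃ c ∈ corners n m, c ∈ S
    · obtain ⟨c, hc, hcS⟩ := h
      obtain ⟨d, hd, hdK, hN⟩ := exists_noncorner_adj_nbrs_of_mem_corners hn hm hc
      have hT := hS.insert_erase hcS hd hN
      have hTcard : (insert d (S.erase c)).card ≤ S.card :=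
        (card_insert_le _ _).trans (card_erase_add_one hcS).le
      exact ih _ (hk ▸ ncard_coe_insert_erase_inter_lt hcS hc hdK) _ hT
        (le_antisymm (hcard ▸ hTcard) (connDomNum_le_card hT)) rfl
    · push Not at h
      exact ⟨S, hS, hcard, h⟩
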